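/- arXiv:1402.4556 — 5 statements merged into one kernel-verified Lean document; each statement's English description precedes it below -/
import Mathlib

section
/- Let d > 1 with d = o(n), let X be a binomial random variable distributed as B(n, d/n), and let q ≥ 2d + 4. Define f_q(x) = 1/(q-x-1) if x ≤ q-2 and f_q(x) = 1 otherwise. Then E[f_q(X)] < 1/d. -/
/-!
Put `a = q - d - 1 ≥ d + 3` and `M(t) = ∑_{j<6} t^j / a^(j+1) + (t / a)^6`. Then
`f_q(k) ≤ M(k - d)` for every `k`: for `k ≤ q - 2` the geometric expansion of `1 / (a - t)` has
remainder `(t / a)^6 / (a - t) ≤ (t / a)^6`, and for larger `k` monotonicity gives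
`M(k - d) ≥ M(a - 1) = 1`. In the falling-factorial basis `M(X - d) = ∑ cⱼ (X)ⱼ`, and the binomial
factorial moments `E (X)ⱼ = n(n-1)⋯(n-j+1) (d/n)^j` tend to `d^j`. So `E M(X - d)` tends to the
Poisson(d) mean `∑ cⱼ d^j`, which is an explicit rational function of `a, d` and is `< 1/d`.
-/

noncomputable def fqr (q : ℝ) (k : ℕ) : ℝ :=
  if (k : ℝ) ≤ q - 2 then 1 / (q - k - 1) else 1

open Finset Filter Topology Asymptotics NNReal

theorem sum_descFactorial_mul_choose_mul_pow {R : Type*} [CommSemiring R] (n j : ℕ) (x y : R) :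
    ∑ k ∈ range (n + 1), (k.descFactorial j : R) * n.choose k * x ^ k * y ^ (n - k) =
      n.descFactorial j * x ^ j * (x + y) ^ (n - j) := by
  rcases le_or_gt j n with hjn | hnj
  · obtain ⟨m, rfl⟩ := Nat.exists_eq_add_of_le hjn
    have hchoose (i : ℕ) (hi : i ≤ m) :
        (j + i).descFactorial j * (j + m).choose (j + i) =
          (j + m).descFactorial j * m.choose i := by
      rw [Nat.descFactorial_eq_factorial_mul_choose, Nat.descFactorial_eq_factorial_mul_choose,
        mul_assoc, mul_comm ((j + i).choose j), Nat.choose_mul (by omega)]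
      simp only [Nat.add_sub_cancel_left]
      ring
    rw [show j + m + 1 = j + (m + 1) by ring, sum_range_add, sum_eq_zero, zero_add, add_pow,
      mul_sum, Nat.add_sub_cancel_left]
    · refine sum_congr rfl fun i hi => ?_
      rw [show j + m - (j + i) = m - i by omega]
      calc _ = ((j + i).descFactorial j * (j + m).choose (j + i) : ℕ) * x ^ j *
            (x ^ i * y ^ (m - i)) := by push_cast; ring
        _ = _ := by rw [hchoose i (by simpa [Nat.lt_succ_iff] using hi)]; push_cast; ring
    · intro k hk
      simp [Nat.descFactorial_eq_zero_iff_lt.2 (mem_range.1 hk)]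
  · rw [Nat.descFactorial_eq_zero_iff_lt.2 hnj, Nat.cast_zero, zero_mul, zero_mul]
    refine sum_eq_zero fun k hk => ?_
    simp [Nat.descFactorial_eq_zero_iff_lt.2 (by have := mem_range.1 hk; omega : k < j)]

noncomputable def binomialExpectation (n : ℕ) (p : ℝ) (g : ℕ → ℝ) : ℝ :=
  ∑ k ∈ range (n + 1), g k * (n.choose k * p ^ k * (1 - p) ^ (n - k))

theorem binomialExpectation_mono {n : ℕ} {p : ℝ} (hp₀ : 0 ≤ p) (hp₁ : p ≤ 1) {f g : ℕ → ℝ}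
    (hfg : ∀ k, f k ≤ g k) : binomialExpectation n p f ≤ binomialExpectation n p g :=
  sum_le_sum fun k _ => mul_le_mul_of_nonneg_right (hfg k) (by have := sub_nonneg.2 hp₁; positivity)

theorem binomialExpectation_descFactorial (n j : ℕ) (p : ℝ) :
    binomialExpectation n p (fun k => k.descFactorial j) = n.descFactorial j * p ^ j := by
  simpa [binomialExpectation, mul_assoc] using sum_descFactorial_mul_choose_mul_pow n j p (1 - p)

theorem binomialExpectation_sum_mul {ι : Type*} (s : Finset ι) (n : ℕ) (p : ℝ) (c : ι → ℝ)
    (g : ι → ℕ → ℝ) :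
    binomialExpectation n p (fun k => ∑ i ∈ s, c i * g i k) =
      ∑ i ∈ s, c i * binomialExpectation n p (g i) := by
  simp only [binomialExpectation, sum_mul, mul_sum, mul_assoc]
  exact sum_comm

theorem tendsto_binomialExpectation_descFactorial (d : ℝ) (j : ℕ) :
    Tendsto (fun n : ℕ => binomialExpectation n (d / n) (fun k => k.descFactorial j)) atTop
      (𝓝 (d ^ j)) := by
  simp_rw [binomialExpectation_descFactorial]
  refine ((isEquivalent_descFactorial j).mul IsEquivalent.refl).symm.tendsto_nhds
    (tendsto_const_nhds.congr' ?_)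
  filter_upwards [eventually_ne_atTop 0] with n hn
  change d ^ j = n ^ j * (d / n) ^ j
  rw [← mul_pow, mul_div_cancel₀ _ (Nat.cast_ne_zero.2 hn)]

theorem tendsto_binomialExpectation_sum_descFactorial (d : ℝ) (s : Finset ℕ) (c : ℕ → ℝ) :
    Tendsto (fun n : ℕ => binomialExpectation n (d / n) (fun k => ∑ j ∈ s, c j * k.descFactorial j))
      atTop (𝓝 (∑ j ∈ s, c j * d ^ j)) := by
  simp_rw [binomialExpectation_sum_mul]
  exact tendsto_finsetSum _ fun j _ => (tendsto_binomialExpectation_descFactorial d j).const_mul _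

/-- The expansion `1 / (a - t) = ∑ t ^ j / a ^ (j + 1)` cut after `m` terms, with `(t / a) ^ m`
in place of the tail. -/
noncomputable def invSubMajorant (m : ℕ) (a t : ℝ) : ℝ :=
  (∑ j ∈ range m, (t / a) ^ j) / a + (t / a) ^ m

theorem inv_sub_le_invSubMajorant {m : ℕ} (hm : Even m) {a t : ℝ} (ha : a ≠ 0) (ht : t ≤ a - 1) :
    1 / (a - t) ≤ invSubMajorant m a t := by
  have hgeom := geom_sum_mul_neg (t / a) m
  have hat : 0 < a - t := by linarith
  have hsum : (∑ j ∈ range m, (t / a) ^ j) / a = (1 - (t / a) ^ m) / (a - t) := by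
    rw [eq_div_iff hat.ne', ← hgeom]
    field_simp
  have hsplit : 1 / (a - t) = (∑ j ∈ range m, (t / a) ^ j) / a + (t / a) ^ m / (a - t) := by
    rw [hsum]
    ring
  rw [hsplit, invSubMajorant]
  gcongr
  exact div_le_self (hm.pow_nonneg _) (by linarith)

theorem invSubMajorant_sub_one (m : ℕ) {a : ℝ} (ha : a ≠ 0) : invSubMajorant m a (a - 1) = 1 := by
  have hgeom := geom_sum_mul_neg ((a - 1) / a) m
  rw [show 1 - (a - 1) / a = 1 / a by field_simp; ring, mul_one_div] at hgeom
  rw [invSubMajorant, hgeom, sub_add_cancel]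

theorem one_le_invSubMajorant (m : ℕ) {a t : ℝ} (ha : 1 ≤ a) (ht : a - 1 ≤ t) :
    1 ≤ invSubMajorant m a t := by
  have ha₀ : 0 < a := by linarith
  rw [← invSubMajorant_sub_one m ha₀.ne', invSubMajorant, invSubMajorant]
  have h₀ : 0 ≤ (a - 1) / a := div_nonneg (by linarith) ha₀.le
  have h₁ : (a - 1) / a ≤ t / a := by gcongr
  gcongr ?_ / a + ?_
  · exact sum_le_sum fun j _ => pow_le_pow_left₀ h₀ h₁ j
  · exact pow_le_pow_left₀ h₀ h₁ m

theorem fqr_le_invSubMajorant {m : ℕ} (hm : Even m) {q c : ℝ} (hqc : c + 2 ≤ q) (k : ℕ) :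
    fqr q k ≤ invSubMajorant m (q - c - 1) (k - c) := by
  unfold fqr
  split_ifs with hk
  · convert inv_sub_le_invSubMajorant hm (by linarith) (by linarith : (k : ℝ) - c ≤ q - c - 1 - 1)
      using 2
    ring
  · exact one_le_invSubMajorant m (by linarith) (by linarith)

/-- The coefficients of `a⁶ • invSubMajorant 6 a (x - d)` in the falling-factorial basis
`x (x - 1) ⋯ (x - j + 1)`. -/
def majorantCoeff (a d : ℝ) : ℕ → ℝ
  | 0 => a ^ 5 - a ^ 4 * d + a ^ 3 * d ^ 2 - a ^ 2 * d ^ 3 + a * d ^ 4 - d ^ 5 + d ^ 6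
  | 1 => 2 - 11 * d + 25 * d ^ 2 - 30 * d ^ 3 + 20 * d ^ 4 - 6 * d ^ 5
      + a * (1 - 4 * d + 6 * d ^ 2 - 4 * d ^ 3) + a ^ 2 * (1 - 3 * d + 3 * d ^ 2)
      + a ^ 3 * (1 - 2 * d) + a ^ 4
  | 2 => 46 - 125 * d + 135 * d ^ 2 - 70 * d ^ 3 + 15 * d ^ 4 + a * (7 - 12 * d + 6 * d ^ 2)
      + a ^ 2 * (3 - 3 * d) + a ^ 3
  | 3 => 115 - 180 * d + 100 * d ^ 2 - 20 * d ^ 3 + a * (6 - 4 * d) + a ^ 2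
  | 4 => 75 - 65 * d + 15 * d ^ 2 + a
  | 5 => 16 - 6 * d
  | 6 => 1
  | _ => 0

theorem invSubMajorant_six_eq {a : ℝ} (ha : a ≠ 0) (d : ℝ) (k : ℕ) :
    invSubMajorant 6 a (k - d) =
      ∑ j ∈ range 7, majorantCoeff a d j / a ^ 6 * k.descFactorial j := by
  simp only [invSubMajorant, majorantCoeff, sum_range_succ, sum_range_zero,
    ← descPochhammer_eval_eq_descFactorial ℝ, descPochhammer_eval_eq_prod_range, prod_range_succ,
    prod_range_zero]
  field_simp
  ring

/- The sum is `a⁵ + a³d + a²d + a(3d² + d) + 15d³ + 35d² + 2d`, the mean of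
`a⁶ • invSubMajorant 6 a (X - d)` for `X ~ Poisson(d)`. With `d = 1 + s`, `a = 4 + s + e` the
difference `a⁶ - d · (sum)` is a polynomial in `s, e` with positive coefficients. -/
theorem mul_sum_majorantCoeff_lt {a d : ℝ} (hd : 1 < d) (ha : d + 3 ≤ a) :
    d * ∑ j ∈ range 7, majorantCoeff a d j * d ^ j < a ^ 6 := by
  obtain ⟨s, hs⟩ : ∃ s : ℝ≥0, (s : ℝ) = d - 1 :=
    ⟨(d - 1).toNNReal, Real.coe_toNNReal _ (by linarith)⟩
  obtain ⟨e, he⟩ : ∃ e : ℝ≥0, (e : ℝ) = a - d - 3 :=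
    ⟨(a - d - 3).toNNReal, Real.coe_toNNReal _ (by linarith)⟩
  obtain rfl : d = 1 + s := by linarith
  obtain rfl : a = 4 + s + e := by linarith
  simp only [majorantCoeff, sum_range_succ, sum_range_zero]
  rw [← sub_pos]
  ring_nf
  positivity

theorem sum_majorantCoeff_div_lt {a d : ℝ} (hd : 1 < d) (ha : d + 3 ≤ a) :
    ∑ j ∈ range 7, majorantCoeff a d j / a ^ 6 * d ^ j < 1 / d := by
  have ha₆ : 0 < a ^ 6 := pow_pos (by linarith) 6
  simp_rw [div_mul_eq_mul_div, ← sum_div]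
  rw [div_lt_div_iff₀ ha₆ (by linarith), one_mul, mul_comm]
  exact mul_sum_majorantCoeff_lt hd ha

theorem expectation_fq_lt (d q : ℝ) (hd : 1 < d) (hq : 2 * d + 4 ≤ q) :
    ∃ N : ℕ, ∀ n ≥ N,
      ∑ k ∈ Finset.range (n + 1),
        fqr q k * (n.choose k : ℝ) * (d / n) ^ k * (1 - d / n) ^ (n - k) < 1 / d := by
  set a := q - d - 1
  have ha : d + 3 ≤ a := by linarith
  have hlim := tendsto_binomialExpectation_sum_descFactorial d (range 7)
    fun j => majorantCoeff a d j / a ^ 6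
  obtain ⟨N, hN⟩ := eventually_atTop.1 <|
    (hlim.eventually (gt_mem_nhds (sum_majorantCoeff_div_lt hd ha))).and (eventually_ge_atTop ⌈d⌉₊)
  refine ⟨N, fun n hn => ?_⟩
  obtain ⟨hlt, hceil⟩ := hN n hn
  have hdn : d ≤ n := Nat.ceil_le.1 hceil
  have hp₁ : d / n ≤ 1 := (div_le_one (by linarith)).2 hdn
  calc _ = binomialExpectation n (d / n) (fqr q) := by simp only [binomialExpectation, mul_assoc]
    _ ≤ _ := binomialExpectation_mono (by positivity) hp₁ fun k =>
        (fqr_le_invSubMajorant (by decide) (by linarith) k).trans_eq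
          (invSubMajorant_six_eq (by linarith : 0 < a).ne' d k)
    _ < 1 / d := hlt
end

section
/- Let (G, L) be a feasible list-coloring instance and v a vertex with |L(v)| > d(v) + 1, where d(v) is the degree of v. Let Δ be a set of vertices not containing v and σ a feasible partial coloring of Δ. Then for every color x ∈ L(v), the conditional probability that a uniformly random proper list-coloring c satisfies c(v) = x given c agrees with σ on Δ is at most 1/(|L(v)| - d(v)). -/
def ProperColoring {V : Type*} (G : SimpleGraph V) {q : ℕ}
    (L : V → Finset (Fin q)) (c : V → Fin q) : Prop :=
  (∀ v, c v ∈ L v) ∧ ∀ u w, G.Adj u w → c u ≠ c w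

/-!
Fix a proper coloring `c` with `c v = x`. Recoloring `v` with any color of `L v` not used on its
neighbours gives again a proper coloring agreeing with `σ` on `Δ` (as `v ∉ Δ`), and there are at
least `|L v| - d(v)` such colors. Distinct pairs `(c, y)` give distinct recolorings, because `c` is
recovered by resetting `v` to `x`. So the extensions of `σ` number at least `|L v| - d(v)` times
those with `c v = x`.
-/

open Finset Function

theorem ProperColoring.update {V : Type*} [DecidableEq V] {G : SimpleGraph V} {q : ℕ}
    {L : V → Finset (Fin q)} {c : V → Fin q} (hc : ProperColoring G L c) {v : V} {y : Fin q}
    (hyL : y ∈ L v) (hy : ∀ w, G.Adj v w → c w ≠ y) :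
    ProperColoring G L (Function.update c v y) := by
  refine ⟨fun u => ?_, fun u w huw => ?_⟩
  · rcases eq_or_ne u v with rfl | hu
    · simpa using hyL
    · simpa [hu] using hc.1 u
  · rcases eq_or_ne u v with rfl | hu
    · simpa [huw.ne'] using (hy w huw).symm
    · rcases eq_or_ne w v with rfl | hw
      · simpa [hu] using hy u huw.symm
      · simpa [hu, hw] using hc.2 u w huw

theorem SimpleGraph.card_sub_degree_le_card_sdiff_image {V α : Type*} [DecidableEq α]
    (G : SimpleGraph V) (v : V) [Fintype (G.neighborSet v)] (s : Finset α) (c : V → α) :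
    #s - G.degree v ≤ #(s \ (G.neighborFinset v).image c) :=
  (Nat.sub_le_sub_left (card_image_le.trans_eq (G.card_neighborFinset_eq_degree v)) _).trans
    (le_card_sdiff _ _)

theorem Finset.sum_card_le_card_of_update_mem {V α : Type*} [DecidableEq V] [DecidableEq α]
    {S : Finset (V → α)} {v : V} {x : α} (A : (V → α) → Finset α)
    (hS : ∀ c ∈ S, c v = x → ∀ y ∈ A c, update c v y ∈ S) :
    ∑ c ∈ S with c v = x, #(A c) ≤ #S := by
  rw [← card_sigma]
  refine card_le_card_of_injOn (fun p => update p.1 v p.2) ?_ ?_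
  · rintro ⟨c, y⟩ hp
    simp only [coe_sigma, Set.mem_sigma_iff, coe_filter, Set.mem_ofPred_eq, mem_coe] at hp
    exact hS c hp.1.1 hp.1.2 y hp.2
  · rintro ⟨c, y⟩ hp ⟨c', y'⟩ hp' h
    simp only [coe_sigma, Set.mem_sigma_iff, coe_filter, Set.mem_ofPred_eq, mem_coe] at hp hp'
    have hy : y = y' := by simpa using congrFun h v
    have hc : c = c' := by
      rw [← update_eq_self v c, ← update_eq_self v c', hp.1.2, hp'.1.2, ← update_idem y,
        ← update_idem y' x c', show update c v y = update c' v y' from h]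
    rw [hc, hy]

open Classical in
theorem card_extensions_apply_eq_mul_le {V : Type*} [Fintype V] {q : ℕ}
    (G : SimpleGraph V) [DecidableRel G.Adj] (L : V → Finset (Fin q)) {v : V} {Δ : Set V}
    (hv : v ∉ Δ) (σ : V → Fin q) (x : Fin q) :
    #{c | ProperColoring G L c ∧ (∀ u ∈ Δ, c u = σ u) ∧ c v = x} * (#(L v) - G.degree v) ≤
      #{c | ProperColoring G L c ∧ ∀ u ∈ Δ, c u = σ u} := by
  set S : Finset (V → Fin q) := {c | ProperColoring G L c ∧ ∀ u ∈ Δ, c u = σ u}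
  have hrecolor : ∀ c ∈ S, c v = x → ∀ y ∈ L v \ (G.neighborFinset v).image c,
      update c v y ∈ S := by
    intro c hc _ y hy
    simp only [S, mem_filter, mem_univ, true_and] at hc ⊢
    simp only [mem_sdiff, mem_image, SimpleGraph.mem_neighborFinset, not_exists, not_and] at hy
    refine ⟨hc.1.update hy.1 hy.2, fun u hu => ?_⟩
    rw [update_of_ne (ne_of_mem_of_not_mem hu hv)]
    exact hc.2 u hu
  calc #{c | ProperColoring G L c ∧ (∀ u ∈ Δ, c u = σ u) ∧ c v = x} * (#(L v) - G.degree v)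
      = #{c ∈ S | c v = x} • (#(L v) - G.degree v) := by
        rw [smul_eq_mul]; congr 2; ext c; simp [S, and_assoc]
    _ ≤ ∑ c ∈ S with c v = x, #(L v \ (G.neighborFinset v).image c) :=
      card_nsmul_le_sum _ _ _ fun c _ => G.card_sub_degree_le_card_sdiff_image v _ c
    _ ≤ #S := sum_card_le_card_of_update_mem _ hrecolor

theorem marginal_upper_bound_general {V : Type*} [Fintype V] {q : ℕ}
    (G : SimpleGraph V) [DecidableRel G.Adj]
    (L : V → Finset (Fin q)) (v : V)
    (hdeg : G.degree v + 1 < (L v).card)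
    (Δ : Set V) (hv : v ∉ Δ) (σ : V → Fin q) :
    ∀ x ∈ L v,
      (Nat.card {c : V → Fin q //
          ProperColoring G L c ∧ (∀ u ∈ Δ, c u = σ u) ∧ c v = x} : ℝ) /
        (Nat.card {c : V → Fin q //
          ProperColoring G L c ∧ ∀ u ∈ Δ, c u = σ u} : ℝ) ≤
      1 / (((L v).card : ℝ) - (G.degree v : ℝ)) := by
  classical
  intro x _
  have hk : G.degree v < #(L v) := by omega
  have hcount := card_extensions_apply_eq_mul_le G L hv σ x
  simp only [Nat.card_eq_fintype_card, Fintype.card_subtype]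
  rw [← Nat.cast_sub hk.le]
  refine div_le_of_le_mul₀ (Nat.cast_nonneg _) (by positivity) ?_
  rw [one_div_mul_eq_div, le_div_iff₀ (by exact_mod_cast Nat.sub_pos_of_lt hk)]
  exact_mod_cast hcount

theorem marginal_upper_bound {V : Type*} [Fintype V] {q : ℕ}
    (G : SimpleGraph V) [DecidableRel G.Adj]
    (L : V → Finset (Fin q)) (v : V)
    (hdeg : G.degree v + 1 < (L v).card)
    (Δ : Set V) (hv : v ∉ Δ) (σ : V → Fin q)
    (hσ : ∃ c, ProperColoring G L c ∧ ∀ u ∈ Δ, c u = σ u) :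
    ∀ x ∈ L v,
      (Nat.card {c : V → Fin q //
          ProperColoring G L c ∧ (∀ u ∈ Δ, c u = σ u) ∧ c v = x} : ℝ) /
        (Nat.card {c : V → Fin q //
          ProperColoring G L c ∧ ∀ u ∈ Δ, c u = σ u} : ℝ) ≤
      1 / (((L v).card : ℝ) - (G.degree v : ℝ)) :=
  marginal_upper_bound_general G L v hdeg Δ hv σ
end

section
/- Let (G, L) be a feasible list-coloring instance and v a permissive vertex (i.e., |L(u)| > d(u) + 1 for u = v and all neighbors u of v). Let Δ be a vertex set with dist(v, Δ) ≥ 2 and σ a feasible coloring of Δ. Then for every x ∈ L(v), the conditional probability that c(v) = x given σ is at least 1/(|L(v)| · 2^{d(v)}). -/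
open Classical in
/-- Recolor `v` to `x`, and recolor each neighbor of `v` currently colored `x`
to some color avoiding `x` and the colors of its neighbors. -/
noncomputable def recolor {V : Type*} [Fintype V] {q : ℕ} (G : SimpleGraph V)
    [DecidableRel G.Adj] (L : V → Finset (Fin q)) (v : V) (x : Fin q)
    (c : V → Fin q) : V → Fin q :=
  fun u =>
    if u = v then x
    else if G.Adj v u ∧ c u = x then
      if h : ((L u) \ insert x ((G.neighborFinset u).image c)).Nonempty then h.choose
      else c u
    else c u

theorem marginal_lower_bound {V : Type*} [Fintype V] {q : ℕ}
    (G : SimpleGraph V) [DecidableRel G.Adj]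
    (L : V → Finset (Fin q)) (v : V)
    (hdegv : G.degree v + 1 < (L v).card)
    (hdegnbr : ∀ u, G.Adj v u → G.degree u + 1 < (L u).card)
    (Δ : Set V) (hdist : ∀ u ∈ Δ, ∀ p : G.Walk v u, 2 ≤ p.length)
    (σ : V → Fin q)
    (hσ : ∃ c, ProperColoring G L c ∧ ∀ u ∈ Δ, c u = σ u) :
    ∀ x ∈ L v,
      1 / (((L v).card : ℝ) * 2 ^ (G.degree v)) ≤
      (Nat.card {c : V → Fin q //
          ProperColoring G L c ∧ (∀ u ∈ Δ, c u = σ u) ∧ c v = x} : ℝ) /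
        (Nat.card {c : V → Fin q //
          ProperColoring G L c ∧ ∀ u ∈ Δ, c u = σ u} : ℝ) := by
  intro x hx
  classical
  set r := recolor G L v x with hr_def
  -- v and its neighbors are not in Δ
  have hvΔ : v ∉ Δ := by
    intro h
    have := hdist v h SimpleGraph.Walk.nil
    simp at this
  have hadjΔ : ∀ u ∈ Δ, ¬ G.Adj v u := by
    intro u hu hadj
    have := hdist u hu (SimpleGraph.Walk.cons hadj SimpleGraph.Walk.nil)
    simp at this
  -- basic properties of recolor
  have hr_v : ∀ c : V → Fin q, r c v = x := by
    intro c; simp [hr_def, recolor]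
  have hr_ne : ∀ (c : V → Fin q) (u : V), u ≠ v → ¬(G.Adj v u ∧ c u = x) →
      r c u = c u := by
    intro c u h1 h2
    simp only [hr_def, recolor, if_neg h1, if_neg h2]
  have hr_sdiff : ∀ (c : V → Fin q) (u : V), u ≠ v → G.Adj v u → c u = x →
      r c u ∈ (L u) \ insert x ((G.neighborFinset u).image c) := by
    intro c u h1 h2 h3
    have hne : ((L u) \ insert x ((G.neighborFinset u).image c)).Nonempty := by
      rw [Finset.sdiff_nonempty]
      intro hsub
      have hc1 := Finset.card_le_card hsub
      have hc2 : (insert x ((G.neighborFinset u).image c)).card ≤ G.degree u + 1 := by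
        refine (Finset.card_insert_le _ _).trans ?_
        have := Finset.card_image_le (s := G.neighborFinset u) (f := c)
        exact Nat.add_le_add_right this 1
      have := hdegnbr u h2
      omega
    simp only [hr_def, recolor, if_neg h1, if_pos (⟨h2, h3⟩ : G.Adj v u ∧ c u = x),
      dif_pos hne]
    exact hne.choose_spec
  -- the recolored coloring is a valid coloring with value x at v
  have hP : ∀ c : V → Fin q, ProperColoring G L c → (∀ u ∈ Δ, c u = σ u) →
      ProperColoring G L (r c) ∧ (∀ u ∈ Δ, r c u = σ u) ∧ r c v = x := by
    intro c hc hagree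
    refine ⟨⟨?_, ?_⟩, ?_, hr_v c⟩
    · -- list membership
      intro u
      by_cases huv : u = v
      · subst huv; rw [hr_v c]; exact hx
      by_cases hu : G.Adj v u ∧ c u = x
      · exact (Finset.mem_sdiff.mp (hr_sdiff c u huv hu.1 hu.2)).1
      · rw [hr_ne c u huv hu]; exact hc.1 u
    · -- properness
      intro a b hab
      by_cases hav : a = v
      · have hab' : G.Adj v b := hav ▸ hab
        have hbv : b ≠ v := (G.ne_of_adj hab').symm
        rw [hav, hr_v c]
        by_cases hb : c b = x
        · have hmem := hr_sdiff c b hbv hab' hb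
          rw [Finset.mem_sdiff] at hmem
          intro h
          exact hmem.2 (by rw [← h]; exact Finset.mem_insert_self _ _)
        · rw [hr_ne c b hbv (fun h => hb h.2)]
          exact fun h => hb h.symm
      by_cases hbv : b = v
      · have hva : G.Adj v a := (hbv ▸ hab : G.Adj a v).symm
        rw [hbv, hr_v c]
        by_cases ha : c a = x
        · have hmem := hr_sdiff c a hav hva ha
          rw [Finset.mem_sdiff] at hmem
          intro h
          exact hmem.2 (by rw [h]; exact Finset.mem_insert_self _ _)
        · rw [hr_ne c a hav (fun h => ha h.2)]
          exact ha
      · by_cases ha : G.Adj v a ∧ c a = x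
        · have hmem := hr_sdiff c a hav ha.1 ha.2
          rw [Finset.mem_sdiff] at hmem
          intro heq
          apply hmem.2
          rw [heq]
          by_cases hb : G.Adj v b ∧ c b = x
          · exact absurd (ha.2.trans hb.2.symm) (hc.2 a b hab)
          · rw [hr_ne c b hbv hb]
            exact Finset.mem_insert_of_mem
              (Finset.mem_image_of_mem c (by simpa using hab))
        · by_cases hb : G.Adj v b ∧ c b = x
          · have hmem := hr_sdiff c b hbv hb.1 hb.2
            rw [Finset.mem_sdiff] at hmem
            intro heq
            apply hmem.2
            rw [← heq, hr_ne c a hav ha]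
            exact Finset.mem_insert_of_mem
              (Finset.mem_image_of_mem c (by simpa using hab.symm))
          · rw [hr_ne c a hav ha, hr_ne c b hbv hb]
            exact hc.2 a b hab
    · -- agreement with σ on Δ
      intro u hu
      have huv : u ≠ v := fun h => hvΔ (h ▸ hu)
      rw [hr_ne c u huv (fun h => hadjΔ u hu h.1)]
      exact hagree u hu
  -- injectivity data
  have hinj : ∀ c1 c2 : V → Fin q, r c1 = r c2 → c1 v = c2 v →
      (∀ u, G.Adj v u → (c1 u = x ↔ c2 u = x)) → c1 = c2 := by
    intro c1 c2 hr12 hv12 hflag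
    funext u
    by_cases huv : u = v
    · subst huv; exact hv12
    by_cases hadj : G.Adj v u
    · by_cases h1 : c1 u = x
      · rw [h1]; exact ((hflag u hadj).mp h1).symm
      · have h2 : ¬ c2 u = x := fun h => h1 ((hflag u hadj).mpr h)
        have e1 := hr_ne c1 u huv (fun h => h1 h.2)
        have e2 := hr_ne c2 u huv (fun h => h2 h.2)
        rw [← e1, ← e2, hr12]
    · have e1 := hr_ne c1 u huv (fun h => hadj h.1)
      have e2 := hr_ne c2 u huv (fun h => hadj h.1)
      rw [← e1, ← e2, hr12]
  -- the fiber-counting injection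
  let g : {c : V → Fin q // ProperColoring G L c ∧ ∀ u ∈ Δ, c u = σ u} →
      {c : V → Fin q // ProperColoring G L c ∧ (∀ u ∈ Δ, c u = σ u) ∧ c v = x} ×
        (↥(L v) × (↥(G.neighborFinset v) → Bool)) :=
    fun p => (⟨r p.1, (hP p.1 p.2.1 p.2.2).1, (hP p.1 p.2.1 p.2.2).2.1,
        (hP p.1 p.2.1 p.2.2).2.2⟩,
      ⟨p.1 v, p.2.1.1 v⟩, fun u => decide (p.1 u.1 = x))
  have hginj : Function.Injective g := by
    intro p1 p2 h
    have h1 : r p1.1 = r p2.1 := congrArg (fun z => (z.1.1 : V → Fin q)) h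
    have h2 : p1.1 v = p2.1 v := congrArg (fun z => (z.2.1.1 : Fin q)) h
    have h3 : (fun u : ↥(G.neighborFinset v) => decide (p1.1 u.1 = x)) =
        (fun u : ↥(G.neighborFinset v) => decide (p2.1 u.1 = x)) :=
      congrArg (fun z => z.2.2) h
    have hflag : ∀ u, G.Adj v u → (p1.1 u = x ↔ p2.1 u = x) := by
      intro u hu
      have := congrFun h3 ⟨u, by simpa using hu⟩
      simpa [decide_eq_decide] using this
    exact Subtype.ext (hinj _ _ h1 h2 hflag)
  have hcard := Nat.card_le_card_of_injective g hginj
  rw [Nat.card_prod, Nat.card_prod] at hcard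
  have e1 : Nat.card ↥(L v) = (L v).card := by
    simp [Nat.card_eq_fintype_card]
  have e2 : Nat.card (↥(G.neighborFinset v) → Bool) = 2 ^ G.degree v := by
    rw [Nat.card_eq_fintype_card, Fintype.card_fun, Fintype.card_bool, Fintype.card_coe]
    rfl
  rw [e1, e2] at hcard
  -- nonemptiness
  obtain ⟨c0, hc0⟩ := hσ
  haveI : Nonempty {c : V → Fin q // ProperColoring G L c ∧ ∀ u ∈ Δ, c u = σ u} :=
    ⟨⟨c0, hc0⟩⟩
  have hNpos : 0 < Nat.card {c : V → Fin q // ProperColoring G L c ∧ ∀ u ∈ Δ, c u = σ u} :=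
    Nat.card_pos
  have hLpos : 0 < (L v).card := Nat.lt_of_le_of_lt (Nat.zero_le _) hdegv
  have hKpos : (0 : ℝ) < ((L v).card : ℝ) * 2 ^ (G.degree v) := by
    have : (0 : ℝ) < ((L v).card : ℝ) := by exact_mod_cast hLpos
    positivity
  have hNpos' : (0 : ℝ) <
      (Nat.card {c : V → Fin q // ProperColoring G L c ∧ ∀ u ∈ Δ, c u = σ u} : ℝ) := by
    exact_mod_cast hNpos
  rw [div_le_div_iff₀ hKpos hNpos', one_mul]
  exact_mod_cast hcard
end

section
/- Let (G, L) be a list-coloring instance, B ⊆ V, Λ ⊆ V, and suppose there is a set S ⊆ V \ (B ∪ Λ) such that |L(v)| > d(v) + 1 for every v ∈ S and removing S disconnects B from Λ. Then for any two feasible partial colorings σ, τ of Λ and any coloring π of B, P[c(B) = π | σ] > 0 if and only if P[c(B) = π | τ] > 0. Consequently the error function E(μ_B^σ, μ_B^τ) is finite. -/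
def ProperColoringOff {V : Type*} (G : SimpleGraph V) {q : ℕ}
    (L : V → Finset (Fin q)) (T : Set V) (c : V → Fin q) : Prop :=
  (∀ v ∉ T, c v ∈ L v) ∧ ∀ u w, G.Adj u w → u ∉ T → w ∉ T → c u ≠ c w

section Greedy

variable {V : Type*} {G : SimpleGraph V} {q : ℕ} {L : V → Finset (Fin q)}

theorem properColoringOff_empty_iff {c : V → Fin q} :
    ProperColoringOff G L ∅ c ↔ ProperColoring G L c := by
  simp [ProperColoringOff, ProperColoring]

theorem exists_mem_list_notMem_image_neighbors [G.LocallyFinite] (c : V → Fin q) {a : V}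
    (ha : G.degree a < (L a).card) : ∃ x ∈ L a, x ∉ (G.neighborFinset a).image c := by
  by_contra! h
  have := (Finset.card_le_card h).trans Finset.card_image_le
  rw [SimpleGraph.card_neighborFinset_eq_degree] at this
  omega

theorem ProperColoringOff.exists_update_of_insert [G.LocallyFinite] [DecidableEq V]
    {T : Set V} {a : V} {c : V → Fin q} (hc : ProperColoringOff G L (insert a T) c)
    (ha : G.degree a < (L a).card) :
    ∃ x, ProperColoringOff G L T (Function.update c a x) := by
  obtain ⟨x, hxL, hx⟩ := exists_mem_list_notMem_image_neighbors c ha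
  have hxadj : ∀ w, G.Adj a w → x ≠ c w := fun w haw hxw =>
    hx (Finset.mem_image.mpr ⟨w, by simpa using haw, hxw.symm⟩)
  refine ⟨x, fun v hv => ?_, fun u w huw hu hw => ?_⟩
  · rcases eq_or_ne v a with rfl | hva
    · simpa using hxL
    · simpa [hva] using hc.1 v (by simp [hva, hv])
  · rcases eq_or_ne u a with rfl | hua
    · simpa [huw.ne.symm] using hxadj w huw
    · rcases eq_or_ne w a with rfl | hwa
      · simpa [hua] using (hxadj u huw.symm).symm
      · simpa [hua, hwa] using hc.2 u w huw (by simp [hua, hu]) (by simp [hwa, hw])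

theorem ProperColoringOff.exists_properColoring [G.LocallyFinite] {T : Finset V} {c₀ : V → Fin q}
    (hc₀ : ProperColoringOff G L T c₀) (hT : ∀ v ∈ T, G.degree v < (L v).card) :
    ∃ c, ProperColoring G L c ∧ ∀ v ∉ T, c v = c₀ v := by
  classical
  induction T using Finset.induction_on generalizing c₀ with
  | empty => exact ⟨c₀, properColoringOff_empty_iff.mp (by simpa using hc₀), fun _ _ => rfl⟩
  | @insert a T haT ih =>
    obtain ⟨x, hx⟩ := ProperColoringOff.exists_update_of_insert (T := (T : Set V))
      (by simpa using hc₀) (hT a (Finset.mem_insert_self a T))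
    obtain ⟨c, hc, hcT⟩ := ih hx fun v hv => hT v (Finset.mem_insert_of_mem hv)
    refine ⟨c, hc, fun v hv => ?_⟩
    rw [Finset.mem_insert, not_or] at hv
    rw [hcT v hv.2, Function.update_of_ne hv.1]

end Greedy

section Cut

variable {V : Type*} {G : SimpleGraph V} {q : ℕ} {L : V → Finset (Fin q)}

theorem ProperColoring.piecewise_properColoringOff {R S : Set V} [DecidablePred (· ∈ R)]
    (hR : ∀ u w, u ∈ R → G.Adj u w → w ∉ S → w ∈ R) {c₁ c₂ : V → Fin q}
    (h₁ : ProperColoring G L c₁) (h₂ : ProperColoring G L c₂) :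
    ProperColoringOff G L S (R.piecewise c₁ c₂) := by
  refine ⟨fun v _ => ?_, fun u w huw hu hw => ?_⟩
  · by_cases hv : v ∈ R <;> simp [hv, h₁.1 v, h₂.1 v]
  · by_cases hu' : u ∈ R
    · simpa [hu', hR u w hu' huw hw] using h₁.2 u w huw
    · have hw' : w ∉ R := fun hw' => hu' (hR w u hw' huw.symm hu)
      simpa [hu', hw'] using h₂.2 u w huw

def reachableAvoiding (G : SimpleGraph V) (B S : Set V) : Set V :=
  {v | ∃ b ∈ B, ∃ p : G.Walk b v, ∀ s ∈ S, s ∉ p.support}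

theorem subset_reachableAvoiding {B S : Set V} (hBS : Disjoint B S) :
    B ⊆ reachableAvoiding G B S := fun b hb =>
  ⟨b, hb, .nil, fun s hs hsb => hBS.notMem_of_mem_left hb (by simp_all)⟩

theorem reachableAvoiding_disjoint_of_separates {B Λ S : Set V}
    (hcut : ∀ u ∈ B, ∀ w ∈ Λ, ∀ p : G.Walk u w, ∃ s ∈ S, s ∈ p.support) :
    Disjoint (reachableAvoiding G B S) Λ :=
  Set.disjoint_left.mpr fun v ⟨b, hb, p, hp⟩ hv =>
    let ⟨s, hs, hsp⟩ := hcut b hb v hv p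
    hp s hs hsp

theorem mem_reachableAvoiding_of_adj {B S : Set V} {u w : V} (hu : u ∈ reachableAvoiding G B S)
    (huw : G.Adj u w) (hw : w ∉ S) : w ∈ reachableAvoiding G B S := by
  obtain ⟨b, hb, p, hp⟩ := hu
  refine ⟨b, hb, p.concat huw, fun s hs hsp => ?_⟩
  rw [SimpleGraph.Walk.support_concat, List.mem_append, List.mem_singleton] at hsp
  rcases hsp with hsp | rfl
  exacts [hp s hs hsp, hw hs]

theorem exists_properColoring_of_separates [Fintype V] [DecidableRel G.Adj] {B Λ S : Set V}
    (hS : S ⊆ (B ∪ Λ)ᶜ) (hSdeg : ∀ v ∈ S, G.degree v < (L v).card)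
    (hcut : ∀ u ∈ B, ∀ w ∈ Λ, ∀ p : G.Walk u w, ∃ s ∈ S, s ∈ p.support)
    {c₁ c₂ : V → Fin q} (h₁ : ProperColoring G L c₁) (h₂ : ProperColoring G L c₂) :
    ∃ c, ProperColoring G L c ∧ (∀ u ∈ Λ, c u = c₂ u) ∧ ∀ u ∈ B, c u = c₁ u := by
  classical
  set R := reachableAvoiding G B S
  have hglue := h₁.piecewise_properColoringOff (R := R)
    (fun _ _ hu huw hw => mem_reachableAvoiding_of_adj hu huw hw) h₂
  obtain ⟨c, hc, hcS⟩ := ProperColoringOff.exists_properColoring (T := S.toFinset)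
    (by simpa using hglue) (by simpa using hSdeg)
  have hnotS : ∀ u ∈ B ∪ Λ, u ∉ S.toFinset := fun u hu huS =>
    hS (Set.mem_toFinset.mp huS) hu
  refine ⟨c, hc, fun u hu => ?_, fun u hu => ?_⟩
  · have huR : u ∉ R := (reachableAvoiding_disjoint_of_separates hcut).notMem_of_mem_right hu
    simp [hcS u (hnotS u (.inr hu)), huR]
  · have huR : u ∈ R := subset_reachableAvoiding
      (Set.disjoint_right.mpr fun _ hs hb => hS hs (.inl hb)) hu
    simp [hcS u (hnotS u (.inl hu)), huR]

end Cut

theorem permissive_cut_positivity_general {V : Type*} [Fintype V] {q : ℕ}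
    (G : SimpleGraph V) [DecidableRel G.Adj]
    (L : V → Finset (Fin q)) (B Λ S : Set V)
    (hS : S ⊆ (B ∪ Λ)ᶜ)
    (hSdeg : ∀ v ∈ S, G.degree v + 1 < (L v).card)
    (hcut : ∀ u ∈ B, ∀ w ∈ Λ, ∀ p : G.Walk u w, ∃ s ∈ S, s ∈ p.support)
    (σ τ : V → Fin q)
    (hσ : ∃ c, ProperColoring G L c ∧ ∀ u ∈ Λ, c u = σ u)
    (hτ : ∃ c, ProperColoring G L c ∧ ∀ u ∈ Λ, c u = τ u)
    (π : V → Fin q) :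
    (0 < Nat.card {c : V → Fin q //
        ProperColoring G L c ∧ (∀ u ∈ Λ, c u = σ u) ∧ ∀ u ∈ B, c u = π u} ↔
     0 < Nat.card {c : V → Fin q //
        ProperColoring G L c ∧ (∀ u ∈ Λ, c u = τ u) ∧ ∀ u ∈ B, c u = π u}) := by
  have hdeg : ∀ v ∈ S, G.degree v < (L v).card := fun v hv => by have := hSdeg v hv; omega
  have transfer : ∀ ρ ρ' : V → Fin q, (∃ c, ProperColoring G L c ∧ ∀ u ∈ Λ, c u = ρ' u) →
      (∃ c, ProperColoring G L c ∧ (∀ u ∈ Λ, c u = ρ u) ∧ ∀ u ∈ B, c u = π u) →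
      ∃ c, ProperColoring G L c ∧ (∀ u ∈ Λ, c u = ρ' u) ∧ ∀ u ∈ B, c u = π u := by
    rintro ρ ρ' ⟨c₂, h₂, h₂Λ⟩ ⟨c₁, h₁, -, h₁B⟩
    obtain ⟨c, hc, hcΛ, hcB⟩ := exists_properColoring_of_separates hS hdeg hcut h₁ h₂
    exact ⟨c, hc, fun u hu => (hcΛ u hu).trans (h₂Λ u hu), fun u hu => (hcB u hu).trans (h₁B u hu)⟩
  simp only [Finite.card_pos_iff, nonempty_subtype]
  exact ⟨transfer σ τ hτ, transfer τ σ hσ⟩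

theorem permissive_cut_positivity {V : Type*} [Fintype V] {q : ℕ}
    (G : SimpleGraph V) [DecidableRel G.Adj]
    (L : V → Finset (Fin q)) (B Λ S : Set V)
    (hS : S ⊆ (B ∪ Λ)ᶜ)
    (hSdeg : ∀ v ∈ S, G.degree v + 1 < (L v).card)
    (hcut : ∀ u ∈ B, ∀ w ∈ Λ, ∀ p : G.Walk u w, ∃ s ∈ S, s ∈ p.support)
    (σ τ : V → Fin q)
    (hσ : ∃ c, ProperColoring G L c ∧ ∀ u ∈ Λ, c u = σ u)
    (hτ : ∃ c, ProperColoring G L c ∧ ∀ u ∈ Λ, c u = τ u)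
    (π : V → Fin q) (hπ : ∀ u ∈ B, π u ∈ L u) :
    (0 < Nat.card {c : V → Fin q //
        ProperColoring G L c ∧ (∀ u ∈ Λ, c u = σ u) ∧ ∀ u ∈ B, c u = π u} ↔
     0 < Nat.card {c : V → Fin q //
        ProperColoring G L c ∧ (∀ u ∈ Λ, c u = τ u) ∧ ∀ u ∈ B, c u = π u}) :=
  permissive_cut_positivity_general G L B Λ S hS hSdeg hcut σ τ hσ hτ π
end

section
/- Let B be a permissive block in a feasible list-coloring instance (G, L) (i.e., every vertex u in the vertex boundary ∂B satisfies |L(u)| > d(u) + 1), and let Δ ⊆ V with dist(B, Δ) ≥ 2. Then for any feasible coloring σ of Δ and any coloring π ∈ L(B), the conditional probability μ_B^σ(π) is strictly positive if and only if π is a proper coloring of the induced subgraph G[B]. -/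
theorem permissive_block_local_feasibility {V : Type*} [Fintype V] {q : ℕ}
    (G : SimpleGraph V) [DecidableRel G.Adj]
    (L : V → Finset (Fin q)) (B Δ : Set V)
    (hB : ∀ u, u ∉ B → (∃ w ∈ B, G.Adj u w) → G.degree u + 1 < (L u).card)
    (hdist : ∀ u ∈ B, ∀ w ∈ Δ, ∀ p : G.Walk u w, 2 ≤ p.length)
    (σ : V → Fin q)
    (hσ : ∃ c, ProperColoring G L c ∧ ∀ u ∈ Δ, c u = σ u)
    (π : V → Fin q) (hπ : ∀ u ∈ B, π u ∈ L u) :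
    (0 < Nat.card {c : V → Fin q //
        ProperColoring G L c ∧ (∀ u ∈ Δ, c u = σ u) ∧ ∀ u ∈ B, c u = π u} ↔
      ∀ u ∈ B, ∀ w ∈ B, G.Adj u w → π u ≠ π w) := by
  classical
  constructor
  · intro hpos u hu w hw hadj
    obtain ⟨⟨⟨c, hc, _, hcB⟩⟩, _⟩ := Nat.card_pos_iff.mp hpos
    rw [← hcB u hu, ← hcB w hw]
    exact hc.2 u w hadj
  · intro hprop
    obtain ⟨c, hc, hcΔ⟩ := hσ
    have key : ∀ S : Finset V, (∀ a ∈ S, a ∉ B ∧ ∃ w ∈ B, G.Adj a w) →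
        ∃ c' : V → Fin q, (∀ v, c' v ∈ L v) ∧ (∀ u ∈ B, c' u = π u) ∧
          (∀ u, u ∉ B → u ∉ S → c' u = c u) ∧
          (∀ u w, G.Adj u w → c' u = c' w →
            (u ∈ B ∧ w ∉ B ∧ w ∉ S) ∨ (w ∈ B ∧ u ∉ B ∧ u ∉ S)) := by
      intro S
      induction S using Finset.induction_on with
      | empty =>
        intro _
        refine ⟨fun v => if v ∈ B then π v else c v, ?_, ?_, ?_, ?_⟩
        · intro v
          by_cases hv : v ∈ B
          · simpa [hv] using hπ v hv
          · simpa [hv] using hc.1 v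
        · intro u hu; simp [hu]
        · intro u hu _; simp [hu]
        · intro u w hadj heq
          by_cases hu : u ∈ B <;> by_cases hw : w ∈ B
          · exact absurd (by simpa [hu, hw] using heq) (hprop u hu w hw hadj)
          · exact Or.inl ⟨hu, hw, Finset.notMem_empty w⟩
          · exact Or.inr ⟨hw, hu, Finset.notMem_empty u⟩
          · exact absurd (by simpa [hu, hw] using heq) (hc.2 u w hadj)
      | @insert a S haS ih =>
        intro hS
        obtain ⟨c', h1, h2, h3, h4⟩ := ih (fun b hb => hS b (Finset.mem_insert_of_mem hb))
        obtain ⟨haB, w0, hw0B, haw0⟩ := hS a (Finset.mem_insert_self a S)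
        have hcard := hB a haB ⟨w0, hw0B, haw0⟩
        have hlt : ((G.neighborFinset a).image c').card < (L a).card := by
          calc ((G.neighborFinset a).image c').card ≤ (G.neighborFinset a).card :=
                Finset.card_image_le
            _ = G.degree a := G.card_neighborFinset_eq_degree a
            _ < (L a).card := by omega
        obtain ⟨k, hkL, hk⟩ := Finset.not_subset.mp
          (fun h : L a ⊆ (G.neighborFinset a).image c' =>
            absurd (Finset.card_le_card h) (not_le.mpr hlt))
        have hk' : ∀ w, G.Adj a w → c' w ≠ k := by
          intro w hw heq
          exact hk (Finset.mem_image.mpr ⟨w, (G.mem_neighborFinset a w).mpr hw, heq⟩)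
        refine ⟨Function.update c' a k, ?_, ?_, ?_, ?_⟩
        · intro v
          rcases eq_or_ne v a with rfl | hv
          · simpa using hkL
          · simpa [Function.update_of_ne hv] using h1 v
        · intro u hu
          have : u ≠ a := fun h => haB (h ▸ hu)
          simpa [Function.update_of_ne this] using h2 u hu
        · intro u hu hu'
          have hua : u ≠ a := fun h => hu' (h ▸ Finset.mem_insert_self a S)
          have huS : u ∉ S := fun h => hu' (Finset.mem_insert_of_mem h)
          simpa [Function.update_of_ne hua] using h3 u hu huS
        · intro u w hadj heq
          rcases eq_or_ne u a with rfl | hu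
          · have hw : w ≠ u := (G.ne_of_adj hadj).symm
            rw [Function.update_self, Function.update_of_ne hw] at heq
            exact absurd heq.symm (hk' w hadj)
          · rcases eq_or_ne w a with rfl | hw
            · rw [Function.update_self, Function.update_of_ne hu] at heq
              exact absurd heq (hk' u hadj.symm)
            · rw [Function.update_of_ne hu, Function.update_of_ne hw] at heq
              rcases h4 u w hadj heq with ⟨h5, h6, h7⟩ | ⟨h5, h6, h7⟩
              · exact Or.inl ⟨h5, h6, by simp [hw, h7]⟩
              · exact Or.inr ⟨h5, h6, by simp [hu, h7]⟩
    obtain ⟨c', h1, h2, h3, h4⟩ := key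
      (Finset.univ.filter (fun u => u ∉ B ∧ ∃ w ∈ B, G.Adj u w))
      (fun a ha => (Finset.mem_filter.mp ha).2)
    rw [Nat.card_pos_iff]
    refine ⟨⟨⟨c', ⟨h1, ?_⟩, ?_, h2⟩⟩, inferInstance⟩
    · intro u w hadj heq
      rcases h4 u w hadj heq with ⟨h5, h6, h7⟩ | ⟨h5, h6, h7⟩
      · exact h7 (Finset.mem_filter.mpr ⟨Finset.mem_univ w, h6, u, h5, hadj.symm⟩)
      · exact h7 (Finset.mem_filter.mpr ⟨Finset.mem_univ u, h6, w, h5, hadj⟩)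
    · intro u hu
      have huB : u ∉ B := fun h => by simpa using hdist u h u hu SimpleGraph.Walk.nil
      have huS : u ∉ Finset.univ.filter (fun u => u ∉ B ∧ ∃ w ∈ B, G.Adj u w) := by
        intro h
        obtain ⟨_, _, w, hwB, hadj⟩ := Finset.mem_filter.mp h
        simpa using hdist w hwB u hu (SimpleGraph.Walk.cons hadj.symm SimpleGraph.Walk.nil)
      rw [h3 u huB huS]
      exact hcΔ u hu
end
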